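/- arXiv:2306.13715 — 3 statements merged into one kernel-verified Lean document; each statement's English description precedes it below -/
import Mathlib

section
/- Let (M, □_M) be a T0-algebra, (N, □_N) an MT-algebra, and let h, g : M → N be MT-morphisms, i.e. complete Boolean homomorphisms (preserving arbitrary suprema and complements) satisfying h(□_M a) ≤ □_N h(a) and g(□_M a) ≤ □_N g(a) for all a ∈ M. If h(a) = g(a) for every open element a of M, then h = g. -/
universe u

/-- An MT-algebra: a complete Boolean algebra equipped with an interior operator. -/
structure MTAlg (M : Type u) [CompleteBooleanAlgebra M] where
  box : M → M
  box_top : box ⊤ = ⊤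
  box_inf : ∀ a b : M, box (a ⊓ b) = box a ⊓ box b
  box_le : ∀ a : M, box a ≤ a
  box_idem : ∀ a : M, box a ≤ box (box a)

namespace MTAlg

variable {M : Type u} [CompleteBooleanAlgebra M] (T : MTAlg M)

/-- The closure operator `◇a = (□(aᶜ))ᶜ`. -/
def dia (a : M) : M := (T.box aᶜ)ᶜ

/-- An element is open if `□a = a`. -/
def IsOp (a : M) : Prop := T.box a = a

/-- An element is closed if `◇a = a`. -/
def IsCl (a : M) : Prop := T.dia a = a

/-- The set `O(M)` of open elements. -/
def opens : Set M := {a | T.IsOp a}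

/-- The set `C(M)` of closed elements. -/
def closeds : Set M := {a | T.IsCl a}

/-- A subset join-generates `M` if every element of `M` is a supremum of a subset of it. -/
def JoinGenerates (S : Set M) : Prop := ∀ a : M, ∃ B ⊆ S, a = sSup B

theorem box_mono {a b : M} (h : a ≤ b) : T.box a ≤ T.box b := by
  have hab : a ⊓ b = a := inf_eq_left.mpr h
  calc T.box a = T.box (a ⊓ b) := by rw [hab]
    _ = T.box a ⊓ T.box b := T.box_inf a b
    _ ≤ T.box b := inf_le_right

theorem isOp_sSup {S : Set M} (h : ∀ a ∈ S, T.IsOp a) : T.IsOp (sSup S) := by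
  refine le_antisymm (T.box_le _) (sSup_le fun a ha => ?_)
  calc a = T.box a := (h a ha).symm
    _ ≤ T.box (sSup S) := T.box_mono (le_sSup ha)

theorem atom_le_sSup {x : M} (hx : IsAtom x) {S : Set M} (h : x ≤ sSup S) :
    ∃ s ∈ S, x ≤ s := by
  by_contra hc
  push_neg at hc
  have h2 : ∀ b ∈ S, x ⊓ b = ⊥ := by
    intro b hb
    rcases hx.le_iff.mp (inf_le_left : x ⊓ b ≤ x) with h' | h'
    · exact h'
    · exact absurd (h' ▸ inf_le_right) (hc b hb)
  have h3 : x ⊓ sSup S = ⊥ := by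
    rw [inf_sSup_eq]
    simp only [iSup_eq_bot]
    intro b hb
    exact h2 b hb
  have hx' : x = ⊥ := by
    rw [inf_eq_left.mpr h] at h3
    exact h3
  exact hx.1 hx'

/-- `η(a)` : the set of atoms below `a`. -/
def eta (a : M) : Set {x : M // IsAtom x} := {x | (x : M) ≤ a}

/-- The topology `τ = {η(a) | a ∈ O(M)}` on the set of atoms of `M`. -/
def atomTopology : TopologicalSpace {x : M // IsAtom x} where
  IsOpen U := ∃ a : M, T.IsOp a ∧ U = eta a
  isOpen_univ := ⟨⊤, T.box_top, by ext x; simp [eta]⟩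
  isOpen_inter := by
    rintro U V ⟨a, ha, rfl⟩ ⟨b, hb, rfl⟩
    refine ⟨a ⊓ b, ?_, ?_⟩
    · show T.box (a ⊓ b) = a ⊓ b
      rw [T.box_inf, ha, hb]
    · ext x
      simp [eta, le_inf_iff]
  isOpen_sUnion := by
    intro C hC
    refine ⟨sSup {a | T.IsOp a ∧ eta a ∈ C}, T.isOp_sSup (fun a ha => ha.1), ?_⟩
    ext x
    constructor
    · rintro ⟨U, hU, hxU⟩
      obtain ⟨a, ha, rfl⟩ := hC U hU
      exact le_trans hxU (le_sSup ⟨ha, hU⟩)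
    · intro hx
      obtain ⟨s, hs, hxs⟩ := atom_le_sSup x.2 hx
      exact ⟨eta s, hs.2, hxs⟩

/-- A completely prime filter of the frame `O(M)` (with arbitrary suprema computed in `M`). -/
structure IsCPF (p : Set M) : Prop where
  subset_opens : p ⊆ T.opens
  top_mem : ⊤ ∈ p
  bot_notMem : ⊥ ∉ p
  mem_of_le : ∀ a ∈ p, ∀ b ∈ T.opens, a ≤ b → b ∈ p
  inf_mem : ∀ a ∈ p, ∀ b ∈ p, a ⊓ b ∈ p
  prime : ∀ S ⊆ T.opens, sSup S ∈ p → ∃ s ∈ S, s ∈ p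

/-- The underlying set of `θ(x) = {a ∈ O(M) | x ≤ a}`. -/
def thetaSet (x : M) : Set M := {a | T.IsOp a ∧ x ≤ a}

/-- An element is saturated if it is an infimum of a set of open elements. -/
def IsSat (a : M) : Prop := ∃ S ⊆ T.opens, a = sInf S

/-- Weakly locally closed: the infimum of a saturated element and a closed element. -/
def IsWLC (a : M) : Prop := ∃ s c : M, T.IsSat s ∧ T.IsCl c ∧ a = s ⊓ c

/-- Locally closed: the infimum of an open element and a closed element. -/
def IsLC (a : M) : Prop := ∃ u c : M, T.IsOp u ∧ T.IsCl c ∧ a = u ⊓ c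

/-- `M` is a `T₀`-algebra if the weakly locally closed elements join-generate `M`. -/
def T0 : Prop := JoinGenerates {a | T.IsWLC a}

/-- `M` is a `T_{1/2}`-algebra if the locally closed elements join-generate `M`. -/
def THalf : Prop := JoinGenerates {a | T.IsLC a}

/-- `M` is a `T₁`-algebra if the closed elements join-generate `M`. -/
def T1 : Prop := JoinGenerates T.closeds

/-- A join-irreducible element of `C(M)`. -/
def JoinIrred (p : M) : Prop :=
  T.IsCl p ∧ p ≠ ⊥ ∧ ∀ a b : M, T.IsCl a → T.IsCl b → p = a ⊔ b → p = a ∨ p = b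

/-- `M` is weakly sober if every join-irreducible element of `C(M)` is `◇x` for some atom `x`. -/
def WeaklySober : Prop := ∀ p : M, T.JoinIrred p → ∃ x : M, IsAtom x ∧ p = T.dia x

/-- `M` is sober if it is weakly sober and a `T₀`-algebra. -/
def Sober : Prop := T.WeaklySober ∧ T.T0

/-- `a ∈ GC(M)` : `a` is approximated from above by regular closed elements. -/
def IsGC (a : M) : Prop := a = sInf {b | ∃ c : M, a ≤ T.box c ∧ b = T.dia (T.box c)}

/-- `M` is a Hausdorff (T₂) algebra if `GC(M)` join-generates `M`. -/
def Hausdorff : Prop := JoinGenerates {a | T.IsGC a}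

/-- `a ◁ b` iff `◇a ≤ □b`. -/
def tri (a b : M) : Prop := T.dia a ≤ T.box b

/-- `M` is a regular (T₃) algebra. -/
def Regular : Prop :=
  T.T1 ∧ ∀ a : M, T.IsOp a → a = sSup {b | T.IsOp b ∧ T.tri b a}

/-- `a ◁◁ b` : there is a family `(c_p)` indexed by `p ∈ ℚ ∩ [0,1]` interpolating
between `a` and `b` with `c_p ◁ c_q` whenever `p < q`. -/
def triQ (a b : M) : Prop :=
  ∃ c : ℚ → M, a ≤ c 0 ∧ c 1 ≤ b ∧
    ∀ p q : ℚ, 0 ≤ p → p < q → q ≤ 1 → T.tri (c p) (c q)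

/-- `M` is a completely regular (T₃½) algebra. -/
def CompletelyRegular : Prop :=
  T.T1 ∧ ∀ a : M, T.IsOp a → a = sSup {b | T.IsOp b ∧ T.triQ b a}

/-- The pseudocomplement of `b` in the frame `O(M)`. -/
def pstarO (b : M) : M := sSup {u | T.IsOp u ∧ u ⊓ b = ⊥}

/-- The rather-below relation `b ≺ a` in the frame `O(M)`. -/
def precO (b a : M) : Prop := T.pstarO b ⊔ a = ⊤

/-- The completely-below relation `b ≺≺ a` in the frame `O(M)`. -/
def precQO (b a : M) : Prop :=
  ∃ c : ℚ → M, (∀ p : ℚ, 0 ≤ p → p ≤ 1 → T.IsOp (c p)) ∧ b ≤ c 0 ∧ c 1 ≤ a ∧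
    ∀ p q : ℚ, 0 ≤ p → p < q → q ≤ 1 → T.precO (c p) (c q)

/-- The frame `O(M)` is completely regular. -/
def FrameCompletelyRegular : Prop :=
  ∀ a : M, T.IsOp a → a = sSup {b | T.IsOp b ∧ T.precQO b a}

/-- `M` is a normal (T₄) algebra. -/
def Normal : Prop :=
  T.T1 ∧ ∀ c d : M, T.IsCl c → T.IsCl d → c ⊓ d = ⊥ →
    ∃ a b : M, T.IsOp a ∧ T.IsOp b ∧ a ⊓ b = ⊥ ∧ c ≤ a ∧ d ≤ b

end MTAlg

/-! The elements on which two complete Boolean homomorphisms agree are closed under arbitrary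
joins, meets and complements. If they contain the open elements, they therefore contain the closed
ones (complements of opens), the saturated ones (meets of opens) and the weakly locally closed
ones; in a `T₀`-algebra the latter join-generate, so the two homomorphisms agree everywhere. -/

section CompleteBooleanHom

variable {α β : Type*} [CompleteBooleanAlgebra α] [CompleteBooleanAlgebra β]

theorem map_sInf_of_map_sSup_of_map_compl {f : α → β}
    (hf_sSup : ∀ A : Set α, f (sSup A) = sSup (f '' A)) (hf_compl : ∀ a : α, f aᶜ = (f a)ᶜ)
    (A : Set α) : f (sInf A) = sInf (f '' A) := by
  have hcompl_image : f '' (compl '' A) = compl '' (f '' A) := by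
    simp only [Set.image_image, hf_compl]
  calc f (sInf A) = f (sSup (compl '' A))ᶜ := by rw [compl_sSup', Set.compl_compl_image]
    _ = (sSup (f '' (compl '' A)))ᶜ := by rw [hf_compl, hf_sSup]
    _ = sInf (f '' A) := by rw [hcompl_image, compl_sSup', Set.compl_compl_image]

variable {f g : α → β} {A : Set α}

theorem map_sSup_eq_of_eqOn (hf_sSup : ∀ A : Set α, f (sSup A) = sSup (f '' A))
    (hg_sSup : ∀ A : Set α, g (sSup A) = sSup (g '' A)) (hA : Set.EqOn f g A) :
    f (sSup A) = g (sSup A) := by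
  rw [hf_sSup, hg_sSup, hA.image_eq]

theorem map_sInf_eq_of_eqOn (hf_sSup : ∀ A : Set α, f (sSup A) = sSup (f '' A))
    (hf_compl : ∀ a : α, f aᶜ = (f a)ᶜ) (hg_sSup : ∀ A : Set α, g (sSup A) = sSup (g '' A))
    (hg_compl : ∀ a : α, g aᶜ = (g a)ᶜ) (hA : Set.EqOn f g A) :
    f (sInf A) = g (sInf A) := by
  rw [map_sInf_of_map_sSup_of_map_compl hf_sSup hf_compl,
    map_sInf_of_map_sSup_of_map_compl hg_sSup hg_compl, hA.image_eq]

theorem eq_of_map_compl_eq (hf_compl : ∀ a : α, f aᶜ = (f a)ᶜ)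
    (hg_compl : ∀ a : α, g aᶜ = (g a)ᶜ) {a : α} (ha : f aᶜ = g aᶜ) : f a = g a := by
  rw [← compl_inj_iff, ← hf_compl, ← hg_compl, ha]

end CompleteBooleanHom

namespace MTAlg

variable {M : Type u} {N : Type*} [CompleteBooleanAlgebra M] [CompleteBooleanAlgebra N]
  {T : MTAlg M}

theorem IsCl.isOp_compl {c : M} (hc : T.IsCl c) : T.IsOp cᶜ := by
  rw [IsOp, ← compl_inj_iff, compl_compl]
  exact hc

theorem eq_of_isWLC_of_eqOn_opens {f g : M → N}
    (hf_sSup : ∀ A : Set M, f (sSup A) = sSup (f '' A)) (hf_compl : ∀ a : M, f aᶜ = (f a)ᶜ)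
    (hg_sSup : ∀ A : Set M, g (sSup A) = sSup (g '' A)) (hg_compl : ∀ a : M, g aᶜ = (g a)ᶜ)
    (h_opens : Set.EqOn f g T.opens) {a : M} (ha : T.IsWLC a) : f a = g a := by
  obtain ⟨s, c, ⟨O, hO, rfl⟩, hc, rfl⟩ := ha
  have h_sat : f (sInf O) = g (sInf O) :=
    map_sInf_eq_of_eqOn hf_sSup hf_compl hg_sSup hg_compl (h_opens.mono hO)
  have h_closed : f c = g c := eq_of_map_compl_eq hf_compl hg_compl (h_opens hc.isOp_compl)
  rw [← sInf_pair]
  refine map_sInf_eq_of_eqOn hf_sSup hf_compl hg_sSup hg_compl ?_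
  rintro x (rfl | rfl)
  exacts [h_sat, h_closed]

end MTAlg

theorem statement5_general {M : Type u} {N : Type v} [CompleteBooleanAlgebra M]
    [CompleteBooleanAlgebra N] (T : MTAlg M) (h g : M → N)
    (hT0 : T.T0)
    (hsup : ∀ A : Set M, h (sSup A) = sSup (h '' A))
    (hcompl : ∀ a : M, h aᶜ = (h a)ᶜ)
    (gsup : ∀ A : Set M, g (sSup A) = sSup (g '' A))
    (gcompl : ∀ a : M, g aᶜ = (g a)ᶜ)
    (heq : ∀ a : M, T.IsOp a → h a = g a) :
    h = g := by
  funext a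
  obtain ⟨B, hB, rfl⟩ := hT0 a
  exact map_sSup_eq_of_eqOn hsup gsup fun b hb =>
    MTAlg.eq_of_isWLC_of_eqOn_opens hsup hcompl gsup gcompl heq (hB hb)

/-- two MT-morphisms out of a `T₀`-algebra that agree on all open elements
are equal. -/
theorem statement5 {M : Type u} {N : Type v} [CompleteBooleanAlgebra M]
    [CompleteBooleanAlgebra N] (T : MTAlg M) (S : MTAlg N) (h g : M → N)
    (hT0 : T.T0)
    (hsup : ∀ A : Set M, h (sSup A) = sSup (h '' A))
    (hcompl : ∀ a : M, h aᶜ = (h a)ᶜ)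
    (hbox : ∀ a : M, h (T.box a) ≤ S.box (h a))
    (gsup : ∀ A : Set M, g (sSup A) = sSup (g '' A))
    (gcompl : ∀ a : M, g aᶜ = (g a)ᶜ)
    (gbox : ∀ a : M, g (T.box a) ≤ S.box (g a))
    (heq : ∀ a : M, T.IsOp a → h a = g a) :
    h = g :=
  statement5_general T h g hT0 hsup hcompl gsup gcompl heq
end

section
/- Let (M, □) be an MT-algebra. The map θ : at(M) → pt(O(M)) defined by θ(x) = {a ∈ O(M) | x ≤ a} is surjective if and only if M is weakly sober. -/
universe u

namespace MTAlg

variable {M : Type u} [CompleteBooleanAlgebra M] (T : MTAlg M)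

theorem le_dia (a : M) : a ≤ T.dia a := by
  have := T.box_le aᶜ
  simpa [dia] using compl_le_compl this

theorem dia_mono {a b : M} (h : a ≤ b) : T.dia a ≤ T.dia b :=
  compl_le_compl (T.box_mono (compl_le_compl h))

theorem isCl_compl_of_isOp {a : M} (h : T.IsOp a) : T.IsCl aᶜ := by
  unfold IsCl dia
  rw [compl_compl, h]

theorem isOp_compl_of_isCl {a : M} (h : T.IsCl a) : T.IsOp aᶜ := by
  have : (T.box aᶜ)ᶜ = a := h
  unfold IsOp
  rw [← compl_compl (T.box aᶜ), this]

theorem isCl_inf {a b : M} (ha : T.IsCl a) (hb : T.IsCl b) : T.IsCl (a ⊓ b) := by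
  refine le_antisymm ?_ (T.le_dia _)
  calc T.dia (a ⊓ b) ≤ T.dia a ⊓ T.dia b :=
        le_inf (T.dia_mono inf_le_left) (T.dia_mono inf_le_right)
    _ = a ⊓ b := by rw [ha, hb]

theorem isOp_top : T.IsOp (⊤ : M) := T.box_top

end MTAlg

/-- the map `θ : at(M) → pt(O(M))`, `θ(x) = {a ∈ O(M) | x ≤ a}`, is
surjective iff `M` is weakly sober. -/
theorem statement8 {M : Type u} [CompleteBooleanAlgebra M] (T : MTAlg M) :
    (∀ p : Set M, T.IsCPF p → ∃ x : M, IsAtom x ∧ T.thetaSet x = p) ↔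
      T.WeaklySober := by
  have key : ∀ s t : M, s ⊓ t = ⊥ → t ≤ sᶜ := fun s t h =>
    le_compl_iff_disjoint_left.mpr (disjoint_iff.mpr h)
  constructor
  · -- surjective ⇒ weakly sober
    intro hsurj p hp
    obtain ⟨hpcl, hpne, hirr⟩ := hp
    set F : Set M := {a | T.IsOp a ∧ a ⊓ p ≠ ⊥} with hF
    have hFcpf : T.IsCPF F := by
      constructor
      · intro a ha; exact ha.1
      · exact ⟨T.isOp_top, by simpa using hpne⟩
      · simp [hF]
      · rintro a ⟨-, hap⟩ b hb hab
        refine ⟨hb, fun h => hap ?_⟩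
        exact le_bot_iff.mp (h ▸ inf_le_inf_right p hab)
      · rintro a ⟨hao, hap⟩ b ⟨hbo, hbp⟩
        refine ⟨by unfold MTAlg.IsOp; rw [T.box_inf, hao, hbo], fun h => ?_⟩
        -- p ≤ aᶜ ⊔ bᶜ, use join-irreducibility
        have hle : p ≤ aᶜ ⊔ bᶜ := by
          rw [← compl_inf]
          exact key _ _ h
        have hsplit : p = (p ⊓ aᶜ) ⊔ (p ⊓ bᶜ) := by
          rw [← inf_sup_left, inf_eq_left.mpr hle]
        rcases hirr _ _ (T.isCl_inf hpcl (T.isCl_compl_of_isOp hao))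
            (T.isCl_inf hpcl (T.isCl_compl_of_isOp hbo)) hsplit with h' | h'
        · refine hap ?_
          have hpa : p ≤ aᶜ := h' ▸ inf_le_right
          exact le_bot_iff.mp ((inf_le_inf_left a hpa).trans (by simp))
        · refine hbp ?_
          have hpb : p ≤ bᶜ := h' ▸ inf_le_right
          exact le_bot_iff.mp ((inf_le_inf_left b hpb).trans (by simp))
      · intro S hS hSup
        by_contra hc
        push_neg at hc
        refine hSup.2 ?_
        rw [sSup_inf_eq]
        refine le_bot_iff.mp (iSup₂_le fun s hs => ?_)
        rw [le_bot_iff]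
        by_contra h'
        exact hc s hs ⟨hS hs, h'⟩
    obtain ⟨x, hx, hxθ⟩ := hsurj F hFcpf
    refine ⟨x, hx, ?_⟩
    have hmem : ∀ a : M, a ∈ F ↔ (T.IsOp a ∧ x ≤ a) := fun a => by
      rw [← hxθ]; exact Iff.rfl
    -- x ≤ p
    have hxp : x ≤ p := by
      by_contra h
      have hxpc : x ≤ pᶜ := by
        rcases hx.le_iff.mp (inf_le_left : x ⊓ p ≤ x) with h' | h'
        · exact le_compl_iff_disjoint_right.mpr (disjoint_iff.mpr h')
        · exact absurd (h' ▸ inf_le_right) h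
      have : pᶜ ∈ F := (hmem pᶜ).mpr ⟨T.isOp_compl_of_isCl hpcl, hxpc⟩
      exact this.2 (by simp)
    have h1 : T.dia x ≤ p := hpcl ▸ T.dia_mono hxp
    have h2 : p ≤ T.dia x := by
      by_contra h
      have hne : (T.dia x)ᶜ ⊓ p ≠ ⊥ := fun h' =>
        h (by simpa using key _ _ h')
      have hop : T.IsOp (T.dia x)ᶜ := by
        unfold MTAlg.dia
        rw [compl_compl]
        unfold MTAlg.IsOp
        exact le_antisymm (T.box_le _) (T.box_idem _)
      have hmemF : (T.dia x)ᶜ ∈ F := ⟨hop, hne⟩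
      have hxle : x ≤ (T.dia x)ᶜ := ((hmem _).mp hmemF).2
      have : x ≤ xᶜ := hxle.trans (compl_le_compl (T.le_dia x))
      exact hx.1 (le_bot_iff.mp (by simpa using le_inf le_rfl this))
    exact le_antisymm h2 h1
  · -- weakly sober ⇒ surjective
    intro hws q hq
    set u : M := sSup {a | T.IsOp a ∧ a ∉ q} with hu
    have huo : T.IsOp u := T.isOp_sSup (fun a ha => ha.1)
    have huq : u ∉ q := by
      intro h
      obtain ⟨s, hs, hsq⟩ := hq.prime _ (fun a ha => ha.1) h
      exact hs.2 hsq
    have hmem : ∀ a : M, T.IsOp a → (a ∈ q ↔ ¬ a ≤ u) := by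
      intro a hao
      constructor
      · intro haq hle
        exact huq (hq.mem_of_le a haq u huo hle)
      · intro h
        by_contra haq
        exact h (le_sSup ⟨hao, haq⟩)
    have hji : T.JoinIrred uᶜ := by
      refine ⟨T.isCl_compl_of_isOp huo, ?_, ?_⟩
      · intro h
        have : u = ⊤ := by simpa using congrArg compl h
        exact huq (this ▸ hq.top_mem)
      · intro a b ha hb hab
        by_contra hc
        push_neg at hc
        have haq : aᶜ ∈ q := by
          refine (hmem _ (T.isOp_compl_of_isCl ha)).mpr (fun hle => hc.1 ?_)
          have h1 : a ≤ uᶜ := hab ▸ le_sup_left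
          exact le_antisymm (by simpa using compl_le_compl hle) h1
        have hbq : bᶜ ∈ q := by
          refine (hmem _ (T.isOp_compl_of_isCl hb)).mpr (fun hle => hc.2 ?_)
          have h1 : b ≤ uᶜ := hab ▸ le_sup_right
          exact le_antisymm (by simpa using compl_le_compl hle) h1
        have := hq.inf_mem _ haq _ hbq
        rw [← compl_sup, ← hab, compl_compl] at this
        exact huq this
    obtain ⟨x, hx, hxd⟩ := hws uᶜ hji
    refine ⟨x, hx, ?_⟩
    have hxu : x ≤ uᶜ := (T.le_dia x).trans (by rw [← hxd])
    ext a
    constructor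
    · rintro ⟨hao, hxa⟩
      refine (hmem a hao).mpr (fun hle => ?_)
      have : x ≤ u := hxa.trans hle
      exact hx.1 (le_bot_iff.mp (by simpa using le_inf this hxu))
    · intro haq
      have hao := hq.subset_opens haq
      refine ⟨hao, ?_⟩
      by_contra h
      have hxac : x ≤ aᶜ := by
        rcases hx.le_iff.mp (inf_le_left : x ⊓ a ≤ x) with h' | h'
        · exact le_compl_iff_disjoint_right.mpr (disjoint_iff.mpr h')
        · exact absurd (h' ▸ inf_le_right) h
      have h1 : T.dia x ≤ aᶜ := (T.isCl_compl_of_isOp hao) ▸ T.dia_mono hxac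
      have h2 : uᶜ ≤ aᶜ := hxd ▸ h1
      have : a ≤ u := by simpa using compl_le_compl h2
      exact (hmem a hao).mp haq this
end

section
/- Let (M, □) be a T1-algebra. Then M is a completely regular MT-algebra if and only if the frame O(M) is completely regular. -/
universe u

namespace MTAlg

variable {M : Type u} [CompleteBooleanAlgebra M] (T : MTAlg M)

theorem isOp_box (a : M) : T.IsOp (T.box a) :=
  le_antisymm (T.box_le _) (T.box_idem a)

theorem isOp_pstarO (b : M) : T.IsOp (T.pstarO b) :=
  T.isOp_sSup (fun _ h => h.1)

theorem pstarO_inf (b : M) : T.pstarO b ⊓ b = ⊥ := by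
  rw [pstarO, sSup_inf_eq]
  simp only [iSup_eq_bot]
  intro u; exact fun hu => hu.2

theorem tri_of_precO {b a : M} (ha : T.IsOp a) (h : T.precO b a) : T.tri b a := by
  have h1 : b ≤ (T.pstarO b)ᶜ :=
    le_compl_iff_disjoint_left.mpr (disjoint_iff.mpr (T.pstarO_inf b))
  have h2 : T.dia ((T.pstarO b)ᶜ) = (T.pstarO b)ᶜ := by
    rw [dia, compl_compl, T.isOp_pstarO b]
  have h3 : T.dia b ≤ (T.pstarO b)ᶜ := h2 ▸ T.dia_mono h1
  have h4 : (T.pstarO b)ᶜ ≤ a := by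
    have h' : (T.pstarO b)ᶜ ⊓ (T.pstarO b ⊔ a) ≤ a := by
      rw [inf_sup_left]; simp
    have h'' : T.pstarO b ⊔ a = ⊤ := h
    simpa [h''] using h'
  exact le_trans h3 (h4.trans (le_of_eq ha.symm))

theorem precO_of_tri {b a : M} (ha : T.IsOp a) (h : T.tri b a) : T.precO b a := by
  have h1 : T.box bᶜ ≤ T.pstarO b :=
    le_sSup ⟨T.isOp_box _, le_antisymm (le_trans (inf_le_inf_right _ (T.box_le _))
      (by simp)) bot_le⟩
  have h2 : T.box bᶜ ⊔ T.dia b = ⊤ := by rw [dia]; simp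
  have h3 : T.dia b ≤ a := le_trans h (T.box_le a)
  have : (⊤ : M) ≤ T.pstarO b ⊔ a := by
    rw [← h2]; exact sup_le_sup h1 h3
  exact top_le_iff.mp this

theorem triQ_iff_precQO {b a : M} (hb : T.IsOp b) (ha : T.IsOp a) :
    T.triQ b a ↔ T.precQO b a := by
  constructor
  · rintro ⟨c, h0, h1, hpq⟩
    refine ⟨fun p => T.box (c p), fun p _ _ => T.isOp_box _, ?_, ?_, ?_⟩
    · calc b = T.box b := hb.symm
        _ ≤ T.box (c 0) := T.box_mono h0
    · exact le_trans (T.box_le _) h1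
    · intro p q hp hpq' hq
      refine T.precO_of_tri (T.isOp_box _) ?_
      calc T.dia (T.box (c p)) ≤ T.dia (c p) := T.dia_mono (T.box_le _)
        _ ≤ T.box (c q) := hpq p q hp hpq' hq
        _ ≤ T.box (T.box (c q)) := T.box_idem _
  · rintro ⟨c, hop, h0, h1, hpq⟩
    refine ⟨c, h0, h1, fun p q hp hpq' hq => ?_⟩
    exact T.tri_of_precO (hop q (le_trans hp hpq'.le) hq) (hpq p q hp hpq' hq)

end MTAlg

/-- a `T₁`-algebra `M` is completely regular iff the frame `O(M)` is
completely regular. -/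
theorem statement16 {M : Type u} [CompleteBooleanAlgebra M] (T : MTAlg M)
    (hT1 : T.T1) :
    T.CompletelyRegular ↔ T.FrameCompletelyRegular := by
  have hsets : ∀ a : M, T.IsOp a →
      {b | T.IsOp b ∧ T.triQ b a} = {b | T.IsOp b ∧ T.precQO b a} := by
    intro a ha
    ext b
    exact and_congr_right fun hb => T.triQ_iff_precQO hb ha
  constructor
  · rintro ⟨_, h⟩ a ha
    rw [← hsets a ha]; exact h a ha
  · intro h
    refine ⟨hT1, fun a ha => ?_⟩
    rw [hsets a ha]; exact h a ha
end
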